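/- arXiv:2605.22750 — 2 statements merged into one kernel-verified Lean document; each statement's English description precedes it below -/
import Mathlib

section
/- Set β = 1 and let (𝔊_w)_{w ∈ S_∞} be a Grothendieck family for β = 1. Then for every w ∈ S_∞ and every i ≥ 1: if i ∉ Des(w) then T_i 𝔊_w = 0 (hence Ĥ^L_i 𝔊_w = Ĥ^R_i 𝔊_w = 0), and if i ∈ Des(w) then Ĥ^L_i 𝔊_w = R_i 𝔊_w + R_i 𝔊_{w s_i} and Ĥ^R_i 𝔊_w = R_{i+1} 𝔊_w + R_{i+1} 𝔊_{w s_i}. -/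
open MvPolynomial

/-- The ambient ring `R = ℤ[x₁, x₂, …]`, with variables indexed by positive integers. -/
abbrev MyR : Type := MvPolynomial ℕ+ ℤ

/-- The Bergeron–Sottile operator `R_i`: the `ℤ`-algebra map with
`x_j ↦ x_j` for `j < i`, `x_i ↦ 0`, and `x_j ↦ x_{j-1}` for `j > i`. -/
noncomputable def BS (i : ℕ+) : MyR →ₐ[ℤ] MyR :=
  aeval fun j : ℕ+ =>
    if j < i then (X j : MyR) else if j = i then 0 else X (j - 1)

/-- Plane binary trees. -/
inductive BTree : Type
  | leaf : BTree
  | node : BTree → BTree → BTree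
  deriving DecidableEq

namespace BTree

def numLeaves : BTree → ℕ+
  | leaf => 1
  | node l r => l.numLeaves + r.numLeaves

/-- Number of internal nodes. -/
def size : BTree → ℕ
  | leaf => 0
  | node l r => l.size + r.size + 1

/-- `qdesSet T a` : the QDes positions contributed by a tree `T` whose leftmost
leaf carries the label `a` (leaves are labeled consecutively left-to-right). -/
def qdesSet : BTree → ℕ+ → Set ℕ+
  | leaf, _ => ∅
  | node leaf leaf, a => {a}
  | node l r, a => l.qdesSet a ∪ r.qdesSet (a + l.numLeaves)

/-- `trim T a i` : replace the terminal node whose leaf-children are labeled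
`i`, `i+1` by a single leaf (`a` = label of the leftmost leaf of `T`). -/
def trim : BTree → ℕ+ → ℕ+ → BTree
  | leaf, _, _ => leaf
  | node l r, a, i =>
    if l = leaf ∧ r = leaf ∧ a = i then leaf
    else node (l.trim a i) (r.trim (a + l.numLeaves) i)

/-- `rightAt T a i = true` iff the terminal node of `T` whose leaf-children are
labeled `i`, `i+1` is the right child of its parent. -/
def rightAt : BTree → ℕ+ → ℕ+ → Bool
  | leaf, _, _ => false
  | node l r, a, i =>
    l.rightAt a i || r.rightAt (a + l.numLeaves) i ||
      (decide (r = node leaf leaf) && decide (a + l.numLeaves = i))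

end BTree

/-- An indexed forest: a sequence of plane binary trees, all but finitely many
of which are the single leaf. -/
structure IndexedForest : Type where
  trees : ℕ → BTree
  finite : {n : ℕ | trees n ≠ BTree.leaf}.Finite

namespace IndexedForest

noncomputable def supp (F : IndexedForest) : Finset ℕ := F.finite.toFinset

/-- `|F|`, the number of internal nodes of `F`. -/
noncomputable def size (F : IndexedForest) : ℕ := ∑ n ∈ F.supp, (F.trees n).size

/-- The label of the leftmost leaf of the `n`-th tree (trees indexed from `0`;
leaves are labeled `1, 2, 3, …` from left to right across the trees). -/
def firstLeaf (F : IndexedForest) (n : ℕ) : ℕ+ :=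
  ⟨1 + ∑ m ∈ Finset.range n, ((F.trees m).numLeaves : ℕ), by omega⟩

/-- `QDes(F)`. -/
def qdes (F : IndexedForest) : Set ℕ+ :=
  ⋃ n : ℕ, (F.trees n).qdesSet (F.firstLeaf n)

/-- `F/i`, the forest obtained by replacing the terminal node with leaf-children
`i`, `i+1` by a single leaf. -/
def trim (F : IndexedForest) (i : ℕ+) : IndexedForest where
  trees := fun n => (F.trees n).trim (F.firstLeaf n) i
  finite := F.finite.subset (fun n hn => by
    simp only [Set.mem_setOf_eq] at hn ⊢
    intro h
    apply hn
    rw [h]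
    rfl)

/-- The empty forest `∅`. -/
protected def empty : IndexedForest :=
  ⟨fun _ => BTree.leaf, Set.finite_empty.subset (fun _ hn => (hn rfl).elim)⟩

/-- The terminal node of `F` at `i ∈ QDes F` is a right child. -/
def rightAt (F : IndexedForest) (i : ℕ+) : Prop :=
  ∃ n : ℕ, (F.trees n).rightAt (F.firstLeaf n) i = true

open Classical in
/-- `min QDes(F)` (defaulting to `1` if `QDes(F)` is empty, i.e. `F = ∅`). -/
noncomputable def minQDes (F : IndexedForest) : ℕ+ :=
  if h : ((fun i : ℕ+ => (i : ℕ)) '' F.qdes).Nonempty then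
    ⟨sInf ((fun i : ℕ+ => (i : ℕ)) '' F.qdes), by
      obtain ⟨i, _, hieq⟩ := Nat.sInf_mem h
      exact hieq ▸ i.2⟩
  else 1

end IndexedForest

/-- Set-valued labeled plane binary trees: each internal node carries a finite
set of positive integers. -/
inductive LTree : Type
  | leaf : LTree
  | node : Finset ℕ+ → LTree → LTree → LTree

namespace LTree

/-- Underlying unlabeled tree. -/
def shape : LTree → BTree
  | leaf => BTree.leaf
  | node _ l r => BTree.node l.shape r.shape

/-- The label set of the top of a subtree; a leaf with label `a` counts as the
singleton `{a}`. -/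
def headSet : LTree → ℕ+ → Finset ℕ+
  | leaf, a => {a}
  | node S _ _, _ => S

/-- Compatibility of a set-valued labeling: every label set is nonempty,
`max κ(v) ≤ min κ(v_L)` and `max κ(v) < min κ(v_R)`.  The parameter `a` is the
label of the leftmost leaf of the subtree. -/
def Compatible : LTree → ℕ+ → Prop
  | leaf, _ => True
  | node S l r, a =>
    S.Nonempty ∧ l.Compatible a ∧ r.Compatible (a + l.shape.numLeaves) ∧
    (∀ s ∈ S, ∀ t ∈ l.headSet a, s ≤ t) ∧
    (∀ s ∈ S, ∀ t ∈ r.headSet (a + l.shape.numLeaves), s < t)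

/-- The monomial `x_κ` contributed by a labeled tree. -/
noncomputable def weight : LTree → MyR
  | leaf => 1
  | node S l r => (∏ j ∈ S, (X j : MyR)) * l.weight * r.weight

/-- `|κ|`, the total cardinality of the label sets. -/
def lsize : LTree → ℕ
  | leaf => 0
  | node S l r => S.card + l.lsize + r.lsize

/-- All label sets are singletons. -/
def allSingle : LTree → Prop
  | leaf => True
  | node S l r => S.card = 1 ∧ l.allSingle ∧ r.allSingle

end LTree

/-- The type of compatible set-valued labelings of the indexed forest `F`. -/
def IndexedForest.Labelings (F : IndexedForest) : Type :=
  {κ : ℕ → LTree //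
    (∀ n, (κ n).shape = F.trees n) ∧ ∀ n, (κ n).Compatible (F.firstLeaf n)}

/-- The grove polynomial `G_F^{(β)} = Σ_κ β^{|κ|-|F|} x_κ`. -/
noncomputable def groveP (β : ℤ) (F : IndexedForest) : MyR :=
  ∑ᶠ κ : F.Labelings,
    C (β ^ ((∑ n ∈ F.supp, (κ.1 n).lsize) - F.size)) * ∏ n ∈ F.supp, (κ.1 n).weight

/-- The forest polynomial `𝔓_F`: the sum of `x_κ` over compatible set-valued
labelings all of whose label sets are singletons. -/
noncomputable def forestPoly (F : IndexedForest) : MyR :=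
  ∑ᶠ κ : {κ : F.Labelings // ∀ n, (κ.1 n).allSingle},
    ∏ n ∈ F.supp, (κ.1.1 n).weight

open Classical in
/-- Fuel-indexed recursion implementing the grove extractor. -/
noncomputable def extractAux (T : ℕ+ → MyR → MyR) (β : ℤ) :
    ℕ → IndexedForest → MyR → MyR
  | 0, _, f => f
  | k + 1, F, f =>
    if F = IndexedForest.empty then f
    else
      extractAux T β k (F.trim F.minQDes)
        (if F.rightAt F.minQDes then (1 + C β * X F.minQDes) * T F.minQDes f
         else T F.minQDes f)

/-- The grove extractor `Ĥ_F`: `Ĥ_∅ = id`, and for `F ≠ ∅` and `i = min QDes F`,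
`Ĥ_F = Ĥ_{F/i} ∘ Ĥ^R_i` if the terminal node at `i` is a right child and
`Ĥ_F = Ĥ_{F/i} ∘ Ĥ^L_i` otherwise, where `Ĥ^L_i = T_i` and
`Ĥ^R_i = (1 + βx_i)·T_i`.  (The recursion is implemented with fuel `|F|`, using
that `|F/i| = |F| - 1`.) -/
noncomputable def extract (T : ℕ+ → MyR → MyR) (β : ℤ) (F : IndexedForest) :
    MyR → MyR :=
  extractAux T β F.size F

/-- `S_∞`: permutations of `{1, 2, …}` fixing all but finitely many points. -/
def SPerm : Type := {w : Equiv.Perm ℕ+ // {x : ℕ+ | w x ≠ x}.Finite}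

namespace SPerm

/-- The identity permutation. -/
protected def one : SPerm :=
  ⟨1, Set.finite_empty.subset (fun _ hx => (hx rfl).elim)⟩

/-- `w * s_i` where `s_i` is the transposition of `i` and `i+1`. -/
noncomputable def mulSwap (w : SPerm) (i : ℕ+) : SPerm :=
  ⟨w.1 * Equiv.swap i (i + 1), by
    apply ((w.2.union (Set.finite_singleton i)).union
      (Set.finite_singleton (i + 1))).subset
    intro x hx
    simp only [Set.mem_setOf_eq, Equiv.Perm.mul_apply] at hx
    simp only [Set.mem_union, Set.mem_setOf_eq, Set.mem_singleton_iff]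
    by_cases h1 : x = i
    · exact Or.inl (Or.inr h1)
    by_cases h2 : x = i + 1
    · exact Or.inr h2
    · exact Or.inl (Or.inl (by rwa [Equiv.swap_apply_of_ne_of_ne h1 h2] at hx))⟩

/-- `ℓ(w)`, the number of inversions. -/
noncomputable def len (w : SPerm) : ℕ :=
  Set.ncard {p : ℕ+ × ℕ+ | p.1 < p.2 ∧ w.1 p.2 < w.1 p.1}

/-- `Des(w) = {i ≥ 1 : w(i) > w(i+1)}`. -/
def des (w : SPerm) : Set ℕ+ := {i : ℕ+ | w.1 (i + 1) < w.1 i}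

end SPerm

/-- `f` is quasisymmetric in `x₁, …, xₙ`: no variable `x_j` with `j > n`
occurs, and coefficients of monomials with the same exponent word on strictly
increasing variable sequences in `{1, …, n}` agree. -/
def IsQuasisym (n : ℕ+) (f : MyR) : Prop :=
  (∀ j : ℕ+, n < j → ∀ m ∈ f.support, m j = 0) ∧
  ∀ k : ℕ, 0 < k → ∀ a : Fin k → ℕ+, ∀ u v : Fin k → ℕ+,
    StrictMono u → StrictMono v → (∀ m, u m ≤ n) → (∀ m, v m ≤ n) →
    coeff (∑ m, Finsupp.single (u m) ((a m : ℕ))) f =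
      coeff (∑ m, Finsupp.single (v m) ((a m : ℕ))) f

/-- The zigzag (chain) tree encoded by a list of booleans: the internal nodes
form a chain `v₁, …, v_k` (`k` = length + 1) and the `m`-th entry records
whether `v_{m+1}` is the right child of `v_m`. -/
def chainTree : List Bool → BTree
  | [] => BTree.node BTree.leaf BTree.leaf
  | b :: rest =>
    if b then BTree.node BTree.leaf (chainTree rest)
    else BTree.node (chainTree rest) BTree.leaf

/-! At `β = 1`, `π_i f = -f` forces `(1 + x_i) s_i f = (1 + x_i) f`, so `f` is
`s_i`-symmetric; since `R_{i+1} ∘ s_i = R_i`, symmetric polynomials are killed by `T_i`.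
This settles the ascent case. At a descent, apply `R_{i+1}` to
`(x_i - x_{i+1}) 𝔊_{w s_i} = (1 + x_{i+1}) 𝔊_w - (1 + x_i) s_i 𝔊_w`; as `𝔊_{w s_i}` is
symmetric (`i` is an ascent of `w s_i`), this gives
`R_{i+1} 𝔊_w - R_i 𝔊_w = x_i (R_i 𝔊_w + R_i 𝔊_{w s_i})`, from which both formulas follow. -/

theorem PNat.swap_lt_swap {i a b : ℕ+} (hab : a < b) (hne : ¬(a = i ∧ b = i + 1)) :
    Equiv.swap i (i + 1) a < Equiv.swap i (i + 1) b := by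
  rw [← PNat.coe_lt_coe] at hab ⊢
  simp only [← PNat.coe_inj, PNat.add_coe, PNat.one_coe] at hne
  rw [Equiv.swap_apply_def, Equiv.swap_apply_def]
  split_ifs <;> simp only [← PNat.coe_inj, PNat.add_coe, PNat.one_coe] at * <;> omega

namespace SPerm

def inversions (w : SPerm) : Set (ℕ+ × ℕ+) :=
  {p | p.1 < p.2 ∧ w.1 p.2 < w.1 p.1}

/-- Every inversion `(a, b)` has `b` bounded by the largest point moved by `w`: either `b` is moved,
or `b < w a` with `w a` moved. -/
theorem finite_inversions (w : SPerm) : w.inversions.Finite := by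
  obtain ⟨M, hM⟩ := w.2.bddAbove
  refine ((Set.finite_Iic M).prod (Set.finite_Iic M)).subset ?_
  rintro ⟨a, b⟩ ⟨hab, hw⟩
  suffices hb : b ≤ M from ⟨hab.le.trans hb, hb⟩
  by_cases hbfix : w.1 b = b
  · have hafix : w.1 a ≠ a := fun h => (hab.trans (hbfix ▸ h ▸ hw)).false
    have hwa : w.1 (w.1 a) ≠ w.1 a := fun h => hafix (w.1.injective h)
    exact ((hbfix ▸ hw).trans_le (hM hwa)).le
  · exact hM hbfix

@[simp]
theorem mulSwap_apply (w : SPerm) (i x : ℕ+) :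
    (w.mulSwap i).1 x = w.1 (Equiv.swap i (i + 1) x) := rfl

@[simp]
theorem mulSwap_mulSwap (w : SPerm) (i : ℕ+) : (w.mulSwap i).mulSwap i = w :=
  Subtype.ext (by simp [mulSwap, mul_assoc])

theorem mem_des_mulSwap_of_not_mem_des {w : SPerm} {i : ℕ+} (h : i ∉ w.des) :
    i ∈ (w.mulSwap i).des := by
  have hne : w.1 i ≠ w.1 (i + 1) := fun h' => (PNat.lt_add_right i 1).ne (w.1.injective h')
  simp only [des, Set.mem_ofPred_eq, not_lt, mulSwap_apply, Equiv.swap_apply_left,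
    Equiv.swap_apply_right] at h ⊢
  exact h.lt_of_ne hne

/-- Applying `s_i` to both entries embeds the inversions of `w s_i` into those of `w` other
than `(i, i + 1)`. -/
theorem len_mulSwap_lt {w : SPerm} {i : ℕ+} (h : i ∈ w.des) : (w.mulSwap i).len < w.len := by
  let e : ℕ+ × ℕ+ → ℕ+ × ℕ+ := Prod.map (Equiv.swap i (i + 1)) (Equiv.swap i (i + 1))
  have hmaps : ∀ p ∈ (w.mulSwap i).inversions, e p ∈ w.inversions \ {(i, i + 1)} := by
    rintro ⟨a, b⟩ ⟨hab, hw⟩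
    simp only [mulSwap_apply] at hw
    have hne : ¬(a = i ∧ b = i + 1) := by
      rintro ⟨rfl, rfl⟩
      simp only [Equiv.swap_apply_left, Equiv.swap_apply_right] at hw
      exact lt_asymm h hw
    refine ⟨⟨PNat.swap_lt_swap hab hne, hw⟩, fun hp => ?_⟩
    simp only [e, Prod.map, Set.mem_singleton_iff, Prod.mk.injEq,
      Equiv.swap_apply_eq_iff, Equiv.swap_apply_left, Equiv.swap_apply_right] at hp
    exact lt_asymm hab (hp.2 ▸ hp.1 ▸ PNat.lt_add_right i 1)
  have hinj : Set.InjOn e (w.mulSwap i).inversions :=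
    (Equiv.prodCongr (Equiv.swap i (i + 1)) (Equiv.swap i (i + 1))).injective.injOn
  calc (w.mulSwap i).len ≤ (w.inversions \ {(i, i + 1)}).ncard :=
        Set.ncard_le_ncard_of_injOn e hmaps hinj w.finite_inversions.sdiff
    _ < w.len :=
        Set.ncard_sdiff_singleton_lt_of_mem ⟨PNat.lt_add_right i 1, h⟩ w.finite_inversions

theorem len_lt_len_mulSwap {w : SPerm} {i : ℕ+} (h : i ∉ w.des) : w.len < (w.mulSwap i).len := by
  simpa using len_mulSwap_lt (mem_des_mulSwap_of_not_mem_des h)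

end SPerm

theorem MvPolynomial.rename_swap_eq_self_of_eq_neg {σ R : Type*} [DecidableEq σ] [CommRing R]
    [IsDomain R] {i j : σ} {f : MvPolynomial σ R}
    (h : (X i - X j) * -f = (1 + X j) * f - rename (Equiv.swap i j) ((1 + X j) * f)) :
    rename (Equiv.swap i j) f = f := by
  have hunit : (1 + X i : MvPolynomial σ R) ≠ 0 := fun h0 => by
    simpa using congrArg constantCoeff h0
  refine mul_left_cancel₀ hunit ?_
  simp only [map_mul, map_add, map_one, rename_X, Equiv.swap_apply_right] at h
  linear_combination h

theorem BS_succ_comp_rename_swap (i : ℕ+) :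
    (BS (i + 1)).comp (rename (Equiv.swap i (i + 1))) = BS i := by
  have hi : i < i + 1 := PNat.lt_add_right i 1
  refine algHom_ext fun j => ?_
  simp only [AlgHom.comp_apply, rename_X, BS, aeval_X]
  rcases lt_trichotomy j i with hj | rfl | hj
  · rw [Equiv.swap_apply_of_ne_of_ne hj.ne (hj.trans hi).ne, if_pos hj, if_pos (hj.trans hi)]
  · simp
  · rcases (PNat.add_one_le_iff.mpr hj).eq_or_lt with rfl | hj'
    · simp [hi.not_gt, hi.ne']
    · rw [Equiv.swap_apply_of_ne_of_ne hj.ne' hj'.ne']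
      simp [not_lt.mpr hj.le, not_lt.mpr hj'.le, hj.ne', hj'.ne']

@[simp]
theorem BS_succ_rename_swap (i : ℕ+) (f : MyR) :
    BS (i + 1) (rename (Equiv.swap i (i + 1)) f) = BS i f :=
  DFunLike.congr_fun (BS_succ_comp_rename_swap i) f

theorem BS_succ_eq_of_rename_swap_eq {i : ℕ+} {f : MyR}
    (hf : rename (Equiv.swap i (i + 1)) f = f) : BS (i + 1) f = BS i f := by
  conv_lhs => rw [← hf]
  exact BS_succ_rename_swap i f

@[simp]
theorem BS_X_self (i : ℕ+) : BS i (X i) = 0 := by simp [BS]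

@[simp]
theorem BS_succ_X_self (i : ℕ+) : BS (i + 1) (X i) = X i := by simp [BS]

theorem eq_zero_of_X_mul_eq_BS_succ_sub_BS {i : ℕ+} {f t : MyR}
    (ht : X i * t = BS (i + 1) f - BS i f) (hf : rename (Equiv.swap i (i + 1)) f = f) :
    t = 0 := by
  rw [BS_succ_eq_of_rename_swap_eq hf, sub_self] at ht
  exact (mul_eq_zero.mp ht).resolve_left (X_ne_zero i)

theorem BS_succ_sub_BS_of_mul_eq {i : ℕ+} {f g : MyR}
    (h : (X i - X (i + 1)) * g =
      (1 + X (i + 1)) * f - rename (Equiv.swap i (i + 1)) ((1 + X (i + 1)) * f))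
    (hg : rename (Equiv.swap i (i + 1)) g = g) :
    BS (i + 1) f - BS i f = X i * (BS i f + BS i g) := by
  have h' := congrArg (BS (i + 1)) h
  simp only [map_mul, map_sub, map_add, map_one, rename_X, Equiv.swap_apply_right, BS_X_self,
    BS_succ_X_self, BS_succ_rename_swap, BS_succ_eq_of_rename_swap_eq hg] at h'
  linear_combination -h'

theorem stmt16_general (T : ℕ+ → MyR → MyR)
    (hT : ∀ (i : ℕ+) (f : MyR), (X i : MyR) * T i f = BS (i + 1) f - BS i f)
    (D : ℕ+ → MyR → MyR)
    (hD : ∀ (i : ℕ+) (f : MyR),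
      (X i - X (i + 1)) * D i f = f - rename (⇑(Equiv.swap i (i + 1))) f)
    (G : SPerm → MyR)
    (hGdown : ∀ (w : SPerm) (i : ℕ+), (w.mulSwap i).len < w.len →
      D i ((1 + X (i + 1)) * G w) = G (w.mulSwap i))
    (hGup : ∀ (w : SPerm) (i : ℕ+), w.len < (w.mulSwap i).len →
      D i ((1 + X (i + 1)) * G w) = -G w)
    (w : SPerm) (i : ℕ+) :
    (i ∉ w.des → T i (G w) = 0) ∧
    (i ∈ w.des →
      T i (G w) = BS i (G w) + BS i (G (w.mulSwap i)) ∧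
      (1 + X i) * T i (G w) =
        BS (i + 1) (G w) + BS (i + 1) (G (w.mulSwap i))) := by
  have hsymm : ∀ v : SPerm, v.len < (v.mulSwap i).len →
      rename (Equiv.swap i (i + 1)) (G v) = G v := fun v hv =>
    rename_swap_eq_self_of_eq_neg (hGup v i hv ▸ hD i _)
  refine ⟨fun hi => eq_zero_of_X_mul_eq_BS_succ_sub_BS (hT i _)
    (hsymm w (SPerm.len_lt_len_mulSwap hi)), fun hi => ?_⟩
  have hlen := SPerm.len_mulSwap_lt hi
  have hg := hsymm (w.mulSwap i) (by rwa [SPerm.mulSwap_mulSwap])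
  have key := BS_succ_sub_BS_of_mul_eq (hGdown w i hlen ▸ hD i _) hg
  have ht : T i (G w) = BS i (G w) + BS i (G (w.mulSwap i)) :=
    mul_left_cancel₀ (X_ne_zero i) ((hT i _).trans key)
  refine ⟨ht, ?_⟩
  rw [BS_succ_eq_of_rename_swap_eq hg, ht]
  linear_combination -key

/-- β = 1: for a Grothendieck family `𝔊`,
if `i ∉ Des w` then `T_i 𝔊_w = 0`; if `i ∈ Des w` then
`Ĥ^L_i 𝔊_w = R_i 𝔊_w + R_i 𝔊_(w sᵢ)` and
`Ĥ^R_i 𝔊_w = R_(i+1) 𝔊_w + R_(i+1) 𝔊_(w sᵢ)`. -/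
theorem stmt16 (T : ℕ+ → MyR → MyR)
    (hT : ∀ (i : ℕ+) (f : MyR), (X i : MyR) * T i f = BS (i + 1) f - BS i f)
    (D : ℕ+ → MyR → MyR)
    (hD : ∀ (i : ℕ+) (f : MyR),
      (X i - X (i + 1)) * D i f = f - rename (⇑(Equiv.swap i (i + 1))) f)
    (G : SPerm → MyR)
    (hG1 : constantCoeff (G SPerm.one) = 1)
    (hG0 : ∀ w : SPerm, w ≠ SPerm.one → constantCoeff (G w) = 0)
    (hGdown : ∀ (w : SPerm) (i : ℕ+), (w.mulSwap i).len < w.len →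
      D i ((1 + X (i + 1)) * G w) = G (w.mulSwap i))
    (hGup : ∀ (w : SPerm) (i : ℕ+), w.len < (w.mulSwap i).len →
      D i ((1 + X (i + 1)) * G w) = -G w)
    (w : SPerm) (i : ℕ+) :
    (i ∉ w.des → T i (G w) = 0) ∧
    (i ∈ w.des →
      T i (G w) = BS i (G w) + BS i (G (w.mulSwap i)) ∧
      (1 + X i) * T i (G w) =
        BS (i + 1) (G w) + BS (i + 1) (G (w.mulSwap i))) :=
  stmt16_general T hT D hD G hGdown hGup w i
end

section
/- Set β = 1 and fix n ≥ 1. Let Z be an indexed forest with QDes(Z) ⊆ {n} whose internal nodes form a chain v_1, …, v_k with k ≥ 1 (v_1 is a root of one of the trees of Z and each v_{m+1} is a child of v_m), and let D = {m ∈ {1, …, k−1} : v_{m+1} is the right child of v_m}. Then G_Z^{(1)} = Σ ∏_{m=1}^{k} ∏_{i ∈ S_m} x_i, where the sum ranges over all k-tuples (S_1, …, S_k) of nonempty subsets of {1, …, n} satisfying max S_m ≤ min S_{m+1} for all 1 ≤ m ≤ k−1, with the strict inequality max S_m < min S_{m+1} whenever m ∈ D. (This identifies the grove polynomials indexed by zigzag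 forests with the multi-fundamental quasisymmetric polynomials of Lam–Pylyavskyy truncated to n variables.) -/
open MvPolynomial

section Aux

/-- count of `true`s. -/
def tcnt : List Bool → ℕ
  | [] => 0
  | b :: r => (if b then 1 else 0) + tcnt r

/-- add a natural number to a positive natural. -/
def pAdd (a : ℕ+) (k : ℕ) : ℕ+ := ⟨a + k, Nat.lt_of_lt_of_le a.2 (Nat.le_add_right _ _)⟩

@[simp] lemma pAdd_coe (a : ℕ+) (k : ℕ) : ((pAdd a k : ℕ+) : ℕ) = a + k := rfl

lemma chainTree_node (d : List Bool) : ∃ x y, chainTree d = BTree.node x y := by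
  cases d with
  | nil => exact ⟨_, _, rfl⟩
  | cons b r =>
    cases b
    · exact ⟨_, _, rfl⟩
    · exact ⟨_, _, rfl⟩

lemma chainTree_ne_leaf (d : List Bool) : chainTree d ≠ BTree.leaf := by
  obtain ⟨x, y, h⟩ := chainTree_node d
  simp [h]

@[simp] lemma qdesSet_leaf (a : ℕ+) : BTree.leaf.qdesSet a = ∅ := rfl
@[simp] lemma qdesSet_nn (a : ℕ+) :
    (BTree.node BTree.leaf BTree.leaf).qdesSet a = {a} := rfl
lemma qdesSet_lnode (x y : BTree) (a : ℕ+) :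
    (BTree.node BTree.leaf (BTree.node x y)).qdesSet a =
      (BTree.node x y).qdesSet (a + 1) := by
  have : (BTree.node BTree.leaf (BTree.node x y)).qdesSet a =
      BTree.leaf.qdesSet a ∪ (BTree.node x y).qdesSet (a + BTree.leaf.numLeaves) := rfl
  simp_all [BTree.numLeaves]
lemma qdesSet_nodel (x y r : BTree) (a : ℕ+) :
    (BTree.node (BTree.node x y) r).qdesSet a =
      (BTree.node x y).qdesSet a ∪ r.qdesSet (a + (BTree.node x y).numLeaves) := rfl

lemma qdesSet_chain (d : List Bool) (a : ℕ+) :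
    (chainTree d).qdesSet a = {pAdd a (tcnt d)} := by
  induction d generalizing a with
  | nil =>
    have h0 : pAdd a (tcnt []) = a := PNat.coe_injective (by simp [tcnt])
    rw [h0]; rfl
  | cons b r ih =>
    obtain ⟨x, y, hxy⟩ := chainTree_node r
    cases b with
    | true =>
      have h1 : chainTree (true :: r) = BTree.node BTree.leaf (chainTree r) := rfl
      rw [h1, hxy, qdesSet_lnode, ← hxy, ih]
      have : pAdd (a + 1) (tcnt r) = pAdd a (tcnt (true :: r)) := by
        apply PNat.coe_injective; simp [tcnt, PNat.add_coe]; omega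
      rw [this]
    | false =>
      have h1 : chainTree (false :: r) = BTree.node (chainTree r) BTree.leaf := rfl
      rw [h1, hxy, qdesSet_nodel, ← hxy, ih]
      have : pAdd a (tcnt r) = pAdd a (tcnt (false :: r)) := by
        apply PNat.coe_injective; simp [tcnt]
      simp [this]

lemma numLeaves_chain (d : List Bool) :
    ((chainTree d).numLeaves : ℕ) = d.length + 2 := by
  induction d with
  | nil => rfl
  | cons b r ih =>
    cases b
    · show (((chainTree r).numLeaves + BTree.leaf.numLeaves : ℕ+) : ℕ) = _
      rw [PNat.add_coe, ih, show ((BTree.leaf.numLeaves : ℕ+) : ℕ) = 1 from rfl, List.length_cons]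
      try omega
    · show ((BTree.leaf.numLeaves + (chainTree r).numLeaves : ℕ+) : ℕ) = _
      rw [PNat.add_coe, ih, show ((BTree.leaf.numLeaves : ℕ+) : ℕ) = 1 from rfl, List.length_cons]
      try omega

/-- Build the labeled chain tree from a tuple of label sets. -/
def buildF : (d : List Bool) → (Fin (d.length + 1) → Finset ℕ+) → LTree
  | [], S => LTree.node (S 0) .leaf .leaf
  | b :: rest, S =>
    if b then LTree.node (S 0) .leaf (buildF rest fun j => S j.succ)
    else LTree.node (S 0) (buildF rest fun j => S j.succ) .leaf

lemma shape_buildF (d : List Bool) (S : Fin (d.length + 1) → Finset ℕ+) :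
    (buildF d S).shape = chainTree d := by
  induction d with
  | nil => rfl
  | cons b r ih =>
    cases b
    · show (LTree.node (S 0) (buildF r fun j => S j.succ) .leaf).shape = _
      simp [LTree.shape, chainTree, ih]
    · show (LTree.node (S 0) .leaf (buildF r fun j => S j.succ)).shape = _
      simp [LTree.shape, chainTree, ih]

lemma headSet_buildF (d : List Bool) (S : Fin (d.length + 1) → Finset ℕ+) (a : ℕ+) :
    (buildF d S).headSet a = S 0 := by
  cases d with
  | nil => rfl
  | cons b r => cases b <;> rfl

lemma weight_buildF (d : List Bool) (S : Fin (d.length + 1) → Finset ℕ+) :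
    (buildF d S).weight = ∏ m : Fin (d.length + 1), ∏ j ∈ S m, (X j : MyR) := by
  induction d with
  | nil =>
    show (∏ j ∈ S 0, (X j : MyR)) * 1 * 1 = _
    simp only [List.length_nil, Fin.prod_univ_succ, Fin.prod_univ_zero, mul_one]
  | cons b r ih =>
    have hih := ih fun j => S j.succ
    have hs : (∏ m : Fin ((b :: r).length + 1), ∏ j ∈ S m, (X j : MyR)) =
        (∏ j ∈ S 0, (X j : MyR)) * (buildF r fun j => S j.succ).weight := by
      simp only [List.length_cons]
      rw [Fin.prod_univ_succ, hih]
    rw [hs]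
    cases b
    · show (∏ j ∈ S 0, (X j : MyR)) * (buildF r fun j => S j.succ).weight * 1 = _
      ring
    · show (∏ j ∈ S 0, (X j : MyR)) * 1 * (buildF r fun j => S j.succ).weight = _
      ring

lemma buildF_injective (d : List Bool) : Function.Injective (buildF d) := by
  induction d with
  | nil =>
    intro S T h
    injection h with h1 _ _
    funext m
    have : m = 0 := Fin.ext (Nat.lt_one_iff.mp m.isLt)
    rw [this, h1]
  | cons b r ih =>
    intro S T h
    have key : S 0 = T 0 ∧
        (fun j : Fin (r.length + 1) => S j.succ) = (fun j : Fin (r.length + 1) => T j.succ) := by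
      cases b
      · simp only [buildF, if_neg Bool.false_ne_true] at h
        injection h with h1 h2 h3
        exact ⟨h1, ih h2⟩
      · simp only [buildF, if_pos rfl] at h
        injection h with h1 h2 h3
        exact ⟨h1, ih h3⟩
    funext m
    exact Fin.cases key.1 (fun j => congrFun key.2 j) m

lemma buildF_surj (d : List Bool) (T : LTree) (hT : T.shape = chainTree d) :
    ∃ S, buildF d S = T := by
  induction d generalizing T with
  | nil =>
    cases T with
    | leaf => exact absurd hT (by simp [LTree.shape, chainTree])
    | node S l r =>
      have hl : l.shape = BTree.leaf ∧ r.shape = BTree.leaf := by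
        rw [chainTree] at hT
        injection hT with h1 h2
        exact ⟨h1, h2⟩
      have hl1 : l = LTree.leaf := by
        cases l with
        | leaf => rfl
        | node _ _ _ => exact absurd hl.1 (by simp [LTree.shape])
      have hr1 : r = LTree.leaf := by
        cases r with
        | leaf => rfl
        | node _ _ _ => exact absurd hl.2 (by simp [LTree.shape])
      exact ⟨fun _ => S, by rw [hl1, hr1]; rfl⟩
  | cons b r ih =>
    cases T with
    | leaf => exact absurd hT.symm (chainTree_ne_leaf _)
    | node St l rr =>
      cases b
      · have h1 : chainTree (false :: r) = BTree.node (chainTree r) BTree.leaf := rfl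
        rw [h1] at hT
        injection hT with hA hB
        have hr1 : rr = LTree.leaf := by
          cases rr with
          | leaf => rfl
          | node _ _ _ => exact absurd hB (by simp [LTree.shape])
        obtain ⟨S', hS'⟩ := ih l hA
        refine ⟨Fin.cases St S', ?_⟩
        have hfun : (fun j : Fin (r.length + 1) =>
            (Fin.cases St S' : Fin (r.length + 2) → Finset ℕ+) j.succ) = S' :=
          funext fun j => by simp
        show LTree.node _ (buildF r _) .leaf = _
        rw [hfun, hS', hr1]
        simp
      · have h1 : chainTree (true :: r) = BTree.node BTree.leaf (chainTree r) := rfl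
        rw [h1] at hT
        injection hT with hA hB
        have hl1 : l = LTree.leaf := by
          cases l with
          | leaf => rfl
          | node _ _ _ => exact absurd hA (by simp [LTree.shape])
        obtain ⟨S', hS'⟩ := ih rr hB
        refine ⟨Fin.cases St S', ?_⟩
        have hfun : (fun j : Fin (r.length + 1) =>
            (Fin.cases St S' : Fin (r.length + 2) → Finset ℕ+) j.succ) = S' :=
          funext fun j => by simp
        show LTree.node _ .leaf (buildF r _) = _
        rw [hfun, hS', hl1]
        simp

@[simp] lemma headSet_leaf (a : ℕ+) : LTree.leaf.headSet a = {a} := rfl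
@[simp] lemma headSet_node (S : Finset ℕ+) (l r : LTree) (a : ℕ+) :
    (LTree.node S l r).headSet a = S := rfl

lemma compatible_node (S0 : Finset ℕ+) (l r : LTree) (a : ℕ+) :
    (LTree.node S0 l r).Compatible a ↔
      (S0.Nonempty ∧ l.Compatible a ∧ r.Compatible (a + l.shape.numLeaves) ∧
        (∀ s ∈ S0, ∀ t ∈ l.headSet a, s ≤ t) ∧
        (∀ s ∈ S0, ∀ t ∈ r.headSet (a + l.shape.numLeaves), s < t)) := Iff.rfl

lemma tcnt_true (r : List Bool) : tcnt (true :: r) = 1 + tcnt r := rfl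
lemma tcnt_false (r : List Bool) : tcnt (false :: r) = tcnt r := Nat.zero_add _

lemma tcnt_le (d : List Bool) : tcnt d ≤ d.length := by
  induction d with
  | nil => exact le_refl 0
  | cons b r ih => simp [tcnt]; split <;> omega

/-- The chain condition on a tuple of label sets. -/
def Cond (n : ℕ+) (d : List Bool) (S : Fin (d.length + 1) → Finset ℕ+) : Prop :=
  (∀ m, (S m).Nonempty) ∧ (∀ m, ∀ j ∈ S m, j ≤ n) ∧
  (∀ m : Fin d.length, ∀ s ∈ S m.castSucc, ∀ t ∈ S m.succ,
    if d.get m = true then s < t else s ≤ t)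

lemma cond_tail {n : ℕ+} {b : Bool} {rest : List Bool}
    {S : Fin ((b :: rest).length + 1) → Finset ℕ+} (h : Cond n (b :: rest) S) :
    Cond n rest (fun j => S j.succ) := by
  obtain ⟨h1, h2, h3⟩ := h
  refine ⟨fun m => h1 m.succ, fun m => h2 m.succ, fun m s hs t ht => ?_⟩
  have hg : (b :: rest).get m.succ = rest.get m := by simp
  have hs' : s ∈ S m.succ.castSucc := by rwa [← Fin.succ_castSucc]
  have := h3 m.succ s hs' t ht
  rwa [hg] at this

lemma cond_pair {n : ℕ+} {b : Bool} {rest : List Bool}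
    {S : Fin ((b :: rest).length + 1) → Finset ℕ+} (h : Cond n (b :: rest) S) :
    ∀ s ∈ S 0, ∀ t ∈ S 1, if b = true then s < t else s ≤ t := by
  intro s hs t ht
  have := h.2.2 (0 : Fin (rest.length + 1)) s (by rwa [Fin.castSucc_zero])
    t (by rwa [Fin.succ_zero_eq_one])
  exact this

lemma cond_cons {n : ℕ+} {b : Bool} {rest : List Bool}
    {S : Fin ((b :: rest).length + 1) → Finset ℕ+}
    (h0 : (S 0).Nonempty) (h0n : ∀ j ∈ S 0, j ≤ n)
    (hpair : ∀ s ∈ S 0, ∀ t ∈ S 1, if b = true then s < t else s ≤ t)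
    (ht : Cond n rest (fun j => S j.succ)) : Cond n (b :: rest) S := by
  obtain ⟨t1, t2, t3⟩ := ht
  refine ⟨fun m => Fin.cases h0 (fun j => t1 j) m,
    fun m => Fin.cases h0n (fun j => t2 j) m, fun m => Fin.cases ?_ ?_ m⟩
  · intro s hs t ht'
    rw [Fin.castSucc_zero] at hs
    rw [Fin.succ_zero_eq_one] at ht'
    exact hpair s hs t ht'
  · intro i s hs t ht'
    have hs' : s ∈ S i.castSucc.succ := by rwa [Fin.succ_castSucc]
    have := t3 i s hs' t ht'
    rwa [show (b :: rest).get i.succ = rest.get i from by simp] 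
  
lemma cond_head (n : ℕ+) : ∀ (d : List Bool) (S : Fin (d.length + 1) → Finset ℕ+),
    Cond n d S → ∀ s ∈ S 0, (s : ℕ) + tcnt d ≤ n := by
  intro d
  induction d with
  | nil =>
    intro S h s hs
    have := (PNat.coe_le_coe _ _).mpr (h.2.1 0 s hs)
    simpa [tcnt] using this
  | cons b rest ih =>
    intro S h s hs
    have htail := cond_tail h
    obtain ⟨t, ht⟩ := h.1 1
    have hb : (t : ℕ) + tcnt rest ≤ n := by
      refine ih _ htail t ?_
      show t ∈ S (0 : Fin (rest.length + 1)).succ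
      rwa [Fin.succ_zero_eq_one]
    have hpair := cond_pair h s hs t ht
    cases b with
    | true =>
      have h' : (s : ℕ) < t := (PNat.coe_lt_coe _ _).mpr (by simpa using hpair)
      rw [tcnt_true]
      omega
    | false =>
      have h' : (s : ℕ) ≤ t := (PNat.coe_le_coe _ _).mpr (by simpa using hpair)
      rw [tcnt_false]
      omega

lemma compat_iff (n : ℕ+) : ∀ (d : List Bool) (a : ℕ+), ((a : ℕ) + tcnt d = n) →
    ∀ S : Fin (d.length + 1) → Finset ℕ+,
    ((buildF d S).Compatible a ↔ Cond n d S) := by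
  intro d
  induction d with
  | nil =>
    intro a ha S
    have han : (a : ℕ) = n := by simpa [tcnt] using ha
    rw [show buildF [] S = LTree.node (S 0) .leaf .leaf from rfl, compatible_node]
    constructor
    · rintro ⟨h1, -, -, h4, -⟩
      refine ⟨fun m => ?_, fun m j hj => ?_, fun m => absurd m.isLt (by simp)⟩
      · have hm : m = 0 := Fin.ext (Nat.lt_one_iff.mp m.isLt)
        rw [hm]; exact h1
      · have hm : m = 0 := Fin.ext (Nat.lt_one_iff.mp m.isLt)
        rw [hm] at hj
        have := h4 j hj a (by simp)
        rw [← PNat.coe_le_coe] at this ⊢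
        omega
    · rintro ⟨h1, h2, -⟩
      refine ⟨h1 0, trivial, trivial, ?_, ?_⟩
      · intro s hs t ht
        rw [headSet_leaf, Finset.mem_singleton] at ht
        subst ht
        have := (PNat.coe_le_coe _ _).mpr (h2 0 s hs)
        rw [← PNat.coe_le_coe]
        omega
      · intro s hs t ht
        rw [headSet_leaf, Finset.mem_singleton] at ht
        subst ht
        have := (PNat.coe_le_coe _ _).mpr (h2 0 s hs)
        rw [← PNat.coe_lt_coe, show ((a + LTree.leaf.shape.numLeaves : ℕ+) : ℕ) = (a : ℕ) + 1 from rfl]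
        omega
  | cons b rest ih =>
    intro a ha S
    cases b with
    | true =>
      have ha' : ((a + 1 : ℕ+) : ℕ) + tcnt rest = n := by
        rw [tcnt_true] at ha
        rw [PNat.add_coe, PNat.one_coe]
        omega
      have hIH := ih (a + 1) ha' (fun j => S j.succ)
      rw [show buildF (true :: rest) S =
        LTree.node (S 0) .leaf (buildF rest fun j => S j.succ) from rfl, compatible_node]
      constructor
      · rintro ⟨h1, -, h3, h4, h5⟩
        have hc : Cond n rest (fun j => S j.succ) := hIH.mp h3
        refine cond_cons h1 ?_ ?_ hc
        · intro j hj
          have h4' := h4 j hj a (by simp)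
          rw [← PNat.coe_le_coe] at h4' ⊢
          omega
        · intro s hs t ht
          have ht' : t ∈ (buildF rest fun j => S j.succ).headSet (a + 1) := by
            rw [headSet_buildF]
            show t ∈ S (0 : Fin (rest.length + 1)).succ
            rwa [Fin.succ_zero_eq_one]
          simpa using h5 s hs t ht'
      · intro hc
        have hc' := cond_tail hc
        refine ⟨hc.1 0, trivial, hIH.mpr hc', ?_, ?_⟩
        · intro s hs t ht
          rw [headSet_leaf, Finset.mem_singleton] at ht
          subst ht
          obtain ⟨u, hu⟩ := hc.1 1
          have h1 : s < u := by simpa using cond_pair hc s hs u hu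
          have h2 : (u : ℕ) + tcnt rest ≤ n := by
            refine cond_head n rest _ hc' u ?_
            show u ∈ S (0 : Fin (rest.length + 1)).succ
            rwa [Fin.succ_zero_eq_one]
          rw [← PNat.coe_lt_coe] at h1
          rw [← PNat.coe_le_coe]
          rw [tcnt_true] at ha
          omega
        · intro s hs t ht
          rw [headSet_buildF] at ht
          have ht' : t ∈ S 1 := by
            rw [show (1 : Fin (rest.length + 2)) = (0 : Fin (rest.length + 1)).succ from
              (Fin.succ_zero_eq_one).symm]
            exact ht
          simpa using cond_pair hc s hs t ht'
    | false =>
      have ha' : (a : ℕ) + tcnt rest = n := by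
        rw [tcnt_false] at ha
        omega
      have hIH := ih a ha' (fun j => S j.succ)
      rw [show buildF (false :: rest) S =
        LTree.node (S 0) (buildF rest fun j => S j.succ) .leaf from rfl, compatible_node]
      constructor
      · rintro ⟨h1, h2, -, h4, -⟩
        have hc : Cond n rest (fun j => S j.succ) := hIH.mp h2
        refine cond_cons h1 ?_ ?_ hc
        · intro j hj
          obtain ⟨u, hu⟩ := hc.1 0
          have h4' : j ≤ u := by
            refine h4 j hj u ?_
            rw [headSet_buildF]
            exact hu
          have h2' : (u : ℕ) + tcnt rest ≤ n := cond_head n rest _ hc u hu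
          rw [← PNat.coe_le_coe] at h4' ⊢
          omega
        · intro s hs t ht
          have ht2 : t ∈ (buildF rest fun j => S j.succ).headSet a := by
            rw [headSet_buildF]
            show t ∈ S (0 : Fin (rest.length + 1)).succ
            rwa [Fin.succ_zero_eq_one]
          simpa using h4 s hs t ht2
      · intro hc
        have hc' := cond_tail hc
        refine ⟨hc.1 0, hIH.mpr hc', trivial, ?_, ?_⟩
        · intro s hs t ht
          rw [headSet_buildF] at ht
          have ht' : t ∈ S 1 := by
            rw [show (1 : Fin (rest.length + 2)) = (0 : Fin (rest.length + 1)).succ from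
              (Fin.succ_zero_eq_one).symm]
            exact ht
          simpa using cond_pair hc s hs t ht'
        · intro s hs t ht
          rw [headSet_leaf, Finset.mem_singleton] at ht
          subst ht
          have hsn : (s : ℕ) ≤ n := (PNat.coe_le_coe _ _).mpr (hc.2.1 0 s hs)
          have hL : (((buildF rest fun j => S j.succ).shape.numLeaves : ℕ+) : ℕ) =
              rest.length + 2 := by
            rw [shape_buildF, numLeaves_chain]
          have htc := tcnt_le rest
          rw [← PNat.coe_lt_coe, PNat.add_coe, hL]
          omega

lemma shape_eq_leaf {T : LTree} (h : T.shape = BTree.leaf) : T = LTree.leaf := by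
  cases T with
  | leaf => rfl
  | node S l r => exact absurd h (by simp [LTree.shape])

end Aux

/-- β = 1: for a zigzag forest `Z` (with `QDes Z ⊆ {n}`, whose
internal nodes form a chain encoded by the boolean list `d`, recording which
nodes are right children of their predecessor), the grove polynomial `G_Z^(1)`
is the multi-fundamental quasisymmetric polynomial in `x₁, …, xₙ`. -/
theorem stmt18 (n : ℕ+) (d : List Bool) (Z : IndexedForest) (p : ℕ)
    (hp : Z.trees p = chainTree d)
    (hleaf : ∀ m : ℕ, m ≠ p → Z.trees m = BTree.leaf)
    (hq : Z.qdes ⊆ {n}) :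
    groveP 1 Z =
      ∑ᶠ S : {S : Fin (d.length + 1) → Finset ℕ+ //
          (∀ m, (S m).Nonempty) ∧
          (∀ m, ∀ j ∈ S m, j ≤ n) ∧
          (∀ m : Fin d.length, ∀ s ∈ S m.castSucc, ∀ t ∈ S m.succ,
            if d.get m = true then s < t else s ≤ t)},
        ∏ m : Fin (d.length + 1), ∏ j ∈ S.1 m, (X j : MyR) := by
  have hsupp : Z.supp = {p} := by
    ext m
    simp only [IndexedForest.supp, Set.Finite.mem_toFinset, Set.mem_setOf_eq,
      Finset.mem_singleton]
    constructor
    · intro h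
      by_contra hmp
      exact h (hleaf m hmp)
    · rintro rfl
      rw [hp]
      exact chainTree_ne_leaf d
  have hmem : pAdd (Z.firstLeaf p) (tcnt d) ∈ Z.qdes := by
    refine Set.mem_iUnion.mpr ⟨p, ?_⟩
    rw [hp, qdesSet_chain]
    rfl
  have ha : ((Z.firstLeaf p : ℕ+) : ℕ) + tcnt d = n := by
    have h2 : pAdd (Z.firstLeaf p) (tcnt d) = n := Set.mem_singleton_iff.mp (hq hmem)
    have h3 := congrArg (fun x : ℕ+ => (x : ℕ)) h2
    simpa using h3
  set Tup := {S : Fin (d.length + 1) → Finset ℕ+ //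
      (∀ m, (S m).Nonempty) ∧
      (∀ m, ∀ j ∈ S m, j ≤ n) ∧
      (∀ m : Fin d.length, ∀ s ∈ S m.castSucc, ∀ t ∈ S m.succ,
        if d.get m = true then s < t else s ≤ t)} with hTup
  have hshape : ∀ (S : Tup) (m : ℕ),
      (if m = p then buildF d S.1 else LTree.leaf).shape = Z.trees m := by
    intro S m
    by_cases hmp : m = p
    · rw [if_pos hmp, shape_buildF, hmp, hp]
    · rw [if_neg hmp, hleaf m hmp]
      rfl
  have hcompat : ∀ (S : Tup) (m : ℕ),
      (if m = p then buildF d S.1 else LTree.leaf).Compatible (Z.firstLeaf m) := by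
    intro S m
    by_cases hmp : m = p
    · rw [if_pos hmp, hmp]
      exact (compat_iff n d (Z.firstLeaf p) ha S.1).mpr S.2
    · rw [if_neg hmp]
      trivial
  let e : Tup → Z.Labelings := fun S =>
    ⟨fun m => if m = p then buildF d S.1 else LTree.leaf, hshape S, hcompat S⟩
  have hinj : Function.Injective e := by
    intro S T h
    have h2 := congrFun (congrArg Subtype.val h) p
    simp only [e, if_pos rfl] at h2
    exact Subtype.ext (buildF_injective d h2)
  have hsurj : Function.Surjective e := by
    intro κ
    obtain ⟨S, hS⟩ := buildF_surj d (κ.1 p) (by rw [κ.2.1 p, hp])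
    have hcond : Cond n d S := by
      refine (compat_iff n d (Z.firstLeaf p) ha S).mp ?_
      rw [hS]
      exact κ.2.2 p
    refine ⟨⟨S, hcond⟩, Subtype.ext (funext fun m => ?_)⟩
    by_cases hmp : m = p
    · simp only [e, if_pos hmp]
      rw [hmp, hS]
    · simp only [e, if_neg hmp]
      exact (shape_eq_leaf (by rw [κ.2.1 m, hleaf m hmp])).symm
  rw [groveP]
  refine (finsum_eq_of_bijective e ⟨hinj, hsurj⟩ ?_).symm
  intro S
  rw [hsupp, Finset.prod_singleton]
  have : (e S).1 p = buildF d S.1 := if_pos rfl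
  rw [this, weight_buildF]
  simp
end
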